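/- Fix reals α, β with 0 ≤ α < 1 and β > 2, and suppose D(a) is bounded. Then for every M ∈ ℕ the set 𝒢(M) = {w ∈ 𝓛 : k₂(w) ≤ M} has specification. -/

import Mathlib

/-!
The upper kneading sequence `b`, the digits of `F^[n]` at `1⁻`, is the lexicographic
supremum of `Σ`. A nonempty cylinder `[w]` is an interval on which `F^[|w|]` is affine with
slope `β ^ |w|`; its image, the follower of `w`, is `[F^[j] 0, F^[k] 1⁻)` where `w` ends with the
first `j` digits of `a` and with the first `k` digits of `b`. For `w ∈ 𝒢(M)`, extending `w` by
`N + 1` further digits of `b` bounds `k` by `M + N + 1` and, as `D(a) ≤ N`, also `j`; so the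
extended follower has one of finitely many positive lengths, and the follower of `w` has length
at least some `δ > 0`. Since `β > 2`, an interval of length `δ` meets some branch in a piece whose
image is longer by a factor `β / 2` unless it contains a full branch; hence within a fixed time
`τ` it covers `[0,1)` along a single cylinder, whose word is the gluing word.
-/

noncomputable section

namespace IntermediateBeta

/-- The intermediate beta transformation `x ↦ βx + α mod 1`. -/
def F (α β : ℝ) (x : ℝ) : ℝ := Int.fract (β * x + α)

/-- The digit sequence of a point: `Om α β x n` is the index `i` with `F^[n] x ∈ J_i`.
For `y ∈ [0,1)` we have `y ∈ J_i ↔ ⌊β y + α⌋ = i`. -/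
def Om (α β : ℝ) (x : ℝ) : ℕ → ℕ := fun n => (⌊β * ((F α β)^[n] x) + α⌋).toNat

/-- `ℓ = ⌈α + β⌉ - 1`. -/
def ell (α β : ℝ) : ℕ := ⌈α + β⌉₊ - 1

/-- The subshift `Σ`: closure (in the product topology) of the set of digit sequences
of points of `[0,1)`. -/
def Sig (α β : ℝ) : Set (ℕ → ℕ) := closure (Om α β '' Set.Ico (0 : ℝ) 1)

/-- The shift map. -/
def shift (x : ℕ → ℕ) : ℕ → ℕ := fun n => x (n + 1)

/-- Lexicographic order on one-sided sequences. -/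
def lexLe (x y : ℕ → ℕ) : Prop := x = y ∨ ∃ k, (∀ i < k, x i = y i) ∧ x k < y k

/-- The language of a subset `S` of the full shift: the finite words occurring as
initial segments of elements of `S`. -/
def langOf (S : Set (ℕ → ℕ)) (w : List ℕ) : Prop :=
  ∃ x ∈ S, ∀ i : Fin w.length, x i = w.get i

/-- Membership in the language `𝓛` of the subshift `Σ`. -/
def inLang (α β : ℝ) (w : List ℕ) : Prop := langOf (Sig α β) w

/-- The tail segment of `w` of length `k` agrees with the initial segment of `s`
of length `k`. -/
def tailAgrees (s : ℕ → ℕ) (w : List ℕ) (k : ℕ) : Prop :=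
  k ≤ w.length ∧ ∀ i < k, w.getD (w.length - k + i) 0 = s i

/-- `kmax s w` is the length of the longest tail segment of `w` agreeing with an
initial segment of `s` (`k₁(w)` when `s = a`, `k₂(w)` when `s = b`). -/
def kmax (s : ℕ → ℕ) (w : List ℕ) : ℕ := sSup {k | tailAgrees s w k}

/-- `D a b` is the set of lengths `n` such that the initial segment of `b` of
length `n` occurs somewhere in `a`.  Thus `D a b` is the set `𝖣(a)` of the paper
and `D b a` is `𝖣(b)`. -/
def D (a b : ℕ → ℕ) : Set ℕ := {n | ∃ j, ∀ i < n, b i = a (j + i)}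

/-- Gluing of the words `w 0, v 0, w 1, v 1, …, v (n-1), w n`. -/
def glue {n : ℕ} (w : Fin (n + 1) → List ℕ) (v : Fin n → List ℕ) : List ℕ :=
  (List.ofFn fun i : Fin n => w i.castSucc ++ v i).flatten ++ w (Fin.last n)

/-- A collection `G` of words inside the language `lang` has specification: there
is `τ ∈ ℕ` such that any finite list of words of `G` can be glued, with gluing
words from `lang` of length `τ`, into a word of `lang`. -/
def HasSpec (lang G : List ℕ → Prop) : Prop :=
  ∃ τ : ℕ, 1 ≤ τ ∧ ∀ n : ℕ, ∀ w : Fin (n + 1) → List ℕ, (∀ i, G (w i)) →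
    ∃ v : Fin n → List ℕ, (∀ i, (v i).length = τ ∧ lang (v i)) ∧ lang (glue w v)

/-- The initial segment of a sequence, as a finite word. -/
def pre (s : ℕ → ℕ) (n : ℕ) : List ℕ := List.ofFn fun i : Fin n => s i

/-- Lexicographic order for finite words (of equal length). -/
def wordLe (u v : List ℕ) : Prop :=
  u = v ∨ ∃ k, (∀ i < k, u.getD i 0 = v.getD i 0) ∧ u.getD k 0 < v.getD k 0

/-- Concatenation of a finite word with an infinite sequence. -/
def wcat (w : List ℕ) (x : ℕ → ℕ) : ℕ → ℕ := fun n =>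
  if h : n < w.length then w.get ⟨n, h⟩ else x (n - w.length)

section UpperOrbit

/-- `upperOrbit α β n` is the left limit of `F^[n]` at `1`: the orbit of `1` under the
left-continuous version `x ↦ βx + α - (⌈βx + α⌉ - 1)` of `F`. -/
def upperOrbit (α β : ℝ) : ℕ → ℝ
  | 0 => 1
  | n + 1 => β * upperOrbit α β n + α - (⌈β * upperOrbit α β n + α⌉ - 1)

def upperDigit (α β : ℝ) (n : ℕ) : ℤ := ⌈β * upperOrbit α β n + α⌉ - 1

def upperSeq (α β : ℝ) (n : ℕ) : ℕ := (upperDigit α β n).toNat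

variable {α β : ℝ}

lemma upperOrbit_succ (n : ℕ) :
    upperOrbit α β (n + 1) = β * upperOrbit α β n + α - upperDigit α β n := by
  simp [upperOrbit, upperDigit]

lemma upperOrbit_pos (n : ℕ) : 0 < upperOrbit α β n := by
  cases n with
  | zero => exact one_pos
  | succ n =>
    rw [upperOrbit_succ, upperDigit]
    have := Int.ceil_lt_add_one (β * upperOrbit α β n + α)
    push_cast
    linarith

lemma natCast_upperSeq (hα0 : 0 ≤ α) (hβ : 0 < β) (n : ℕ) :
    (upperSeq α β n : ℤ) = upperDigit α β n := by
  have hpos : 0 < β * upperOrbit α β n + α := by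
    nlinarith [upperOrbit_pos (α := α) (β := β) n]
  have : (0 : ℤ) < ⌈β * upperOrbit α β n + α⌉ := Int.ceil_pos.mpr hpos
  rw [upperSeq, upperDigit, Int.toNat_of_nonneg (by omega)]

lemma F_apply (x : ℝ) : F α β x = β * x + α - ⌊β * x + α⌋ := rfl

lemma F_mem_Ico (x : ℝ) : F α β x ∈ Set.Ico 0 1 :=
  ⟨Int.fract_nonneg _, Int.fract_lt_one _⟩

lemma iterate_F_mem_Ico {x : ℝ} (hx : x ∈ Set.Ico 0 1) (n : ℕ) :
    (F α β)^[n] x ∈ Set.Ico 0 1 := by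
  cases n with
  | zero => exact hx
  | succ n => rw [Function.iterate_succ_apply']; exact F_mem_Ico _

lemma Om_iterate (x : ℝ) (m n : ℕ) : Om α β ((F α β)^[m] x) n = Om α β x (m + n) := by
  simp [Om, ← Function.iterate_add_apply, Nat.add_comm]

lemma natCast_Om (hα0 : 0 ≤ α) (hβ : 0 < β) {x : ℝ} (hx : x ∈ Set.Ico 0 1) (n : ℕ) :
    (Om α β x n : ℤ) = ⌊β * (F α β)^[n] x + α⌋ := by
  have := (iterate_F_mem_Ico (α := α) (β := β) hx n).1
  exact Int.toNat_of_nonneg (Int.floor_nonneg.mpr (by positivity))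

lemma F_eq_of_mem_Ioo_upperOrbit (hβ : 0 < β) (m : ℕ) :
    ∃ ε > 0, ∀ u ∈ Set.Ioo (upperOrbit α β m - ε) (upperOrbit α β m),
      ⌊β * u + α⌋ = upperDigit α β m ∧
        F α β u = upperOrbit α β (m + 1) + β * (u - upperOrbit α β m) := by
  set t := β * upperOrbit α β m + α
  have hceil : (⌈t⌉ : ℝ) - 1 < t := by linarith [Int.ceil_lt_add_one t]
  refine ⟨(t - (⌈t⌉ - 1)) / β, div_pos (by linarith) hβ, fun u ⟨hu1, hu2⟩ => ?_⟩
  have hlo : (⌈t⌉ : ℝ) - 1 < β * u + α := by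
    have : β * ((t - (⌈t⌉ - 1)) / β) = t - (⌈t⌉ - 1) := by field_simp
    nlinarith
  have hhi : β * u + α < t := by nlinarith
  have hfloor : ⌊β * u + α⌋ = upperDigit α β m := by
    rw [upperDigit, Int.floor_eq_iff]
    push_cast
    constructor <;> linarith [Int.le_ceil t]
  refine ⟨hfloor, ?_⟩
  rw [F_apply, hfloor, upperOrbit_succ]
  ring

lemma exists_iterate_near_upperOrbit (hβ : 0 < β) (m n : ℕ) :
    ∃ ε > 0, ∀ u ∈ Set.Ioo (upperOrbit α β m - ε) (upperOrbit α β m),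
      (∀ i < n, ⌊β * (F α β)^[i] u + α⌋ = upperDigit α β (m + i)) ∧
        (F α β)^[n] u = upperOrbit α β (m + n) + β ^ n * (u - upperOrbit α β m) := by
  induction n with
  | zero => exact ⟨1, one_pos, fun u _ => ⟨fun i hi => absurd hi i.not_lt_zero, by simp⟩⟩
  | succ n ih =>
    obtain ⟨ε₁, hε₁, H₁⟩ := ih
    obtain ⟨ε₂, hε₂, H₂⟩ := F_eq_of_mem_Ioo_upperOrbit (α := α) hβ (m + n)
    have hβn : 0 < β ^ n := by positivity
    refine ⟨min ε₁ (ε₂ / β ^ n), by positivity, fun u ⟨hu1, hu2⟩ => ?_⟩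
    have hε := min_le_left ε₁ (ε₂ / β ^ n)
    have hε' := min_le_right ε₁ (ε₂ / β ^ n)
    obtain ⟨hdigits, hval⟩ := H₁ u ⟨by linarith, hu2⟩
    have hnear : (F α β)^[n] u ∈
        Set.Ioo (upperOrbit α β (m + n) - ε₂) (upperOrbit α β (m + n)) := by
      have : β ^ n * (ε₂ / β ^ n) = ε₂ := by field_simp
      rw [hval]
      constructor <;> nlinarith
    obtain ⟨hdigit, hstep⟩ := H₂ _ hnear
    refine ⟨fun i hi => ?_, ?_⟩
    · rcases Nat.lt_succ_iff_lt_or_eq.mp hi with hi | rfl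
      · exact hdigits i hi
      · exact hdigit
    · rw [Function.iterate_succ_apply', hstep, hval, ← add_assoc, pow_succ]
      ring

end UpperOrbit

section Supremum

lemma lexLe_iff_forall_le {x y : ℕ → ℕ} :
    lexLe x y ↔ ∀ t, (∀ i < t, x i = y i) → x t ≤ y t := by
  constructor
  · rintro (rfl | ⟨k, hk, hlt⟩) t ht
    · exact le_rfl
    · rcases lt_trichotomy t k with h | rfl | h
      · exact (hk t h).le
      · exact hlt.le
      · exact absurd (ht k h) hlt.ne
  · intro h
    by_cases hxy : x = y
    · exact Or.inl hxy
    have hex : ∃ t, x t ≠ y t := Function.ne_iff.mp hxy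
    have hmin : ∀ i < Nat.find hex, x i = y i := fun i hi => not_not.mp (Nat.find_min hex hi)
    exact Or.inr ⟨Nat.find hex, hmin, lt_of_le_of_ne (h _ hmin) (Nat.find_spec hex)⟩

lemma lexLe_antisymm {x y : ℕ → ℕ} (hxy : lexLe x y) (hyx : lexLe y x) : x = y := by
  rw [lexLe_iff_forall_le] at hxy hyx
  funext t
  induction t using Nat.strong_induction_on with
  | _ t ih => exact le_antisymm (hxy t ih) (hyx t fun i hi => (ih i hi).symm)

variable {α β : ℝ}

lemma iterate_lt_upperOrbit (hα0 : 0 ≤ α) (hβ : 0 < β) {x : ℝ} (hx : x ∈ Set.Ico 0 1) (t : ℕ)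
    (hagree : ∀ i < t, Om α β x i = upperSeq α β i) : (F α β)^[t] x < upperOrbit α β t := by
  induction t with
  | zero => simpa [upperOrbit] using hx.2
  | succ t ih =>
    have hlt := ih fun i hi => hagree i (by omega)
    have hfloor : ⌊β * (F α β)^[t] x + α⌋ = upperDigit α β t := by
      rw [← natCast_Om hα0 hβ hx, ← natCast_upperSeq hα0 hβ, hagree t (by omega)]
    rw [Function.iterate_succ_apply', F_apply, hfloor, upperOrbit_succ]
    nlinarith

lemma lexLe_Om_upperSeq (hα0 : 0 ≤ α) (hβ : 0 < β) {x : ℝ} (hx : x ∈ Set.Ico 0 1) :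
    lexLe (Om α β x) (upperSeq α β) := by
  refine lexLe_iff_forall_le.mpr fun t hagree => ?_
  have hlt : β * (F α β)^[t] x + α < β * upperOrbit α β t + α := by
    nlinarith [iterate_lt_upperOrbit hα0 hβ hx t hagree]
  have : ⌊β * (F α β)^[t] x + α⌋ < ⌈β * upperOrbit α β t + α⌉ :=
    Int.lt_ceil.mpr ((Int.floor_le _).trans_lt hlt)
  zify
  rw [natCast_Om hα0 hβ hx, natCast_upperSeq hα0 hβ, upperDigit]
  omega

lemma exists_Om_eq_of_mem_Sig {y : ℕ → ℕ} (hy : y ∈ Sig α β) (t : ℕ) :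
    ∃ x ∈ Set.Ico 0 1, ∀ i < t, Om α β x i = y i := by
  have hU : IsOpen (⋂ i ∈ Finset.range t, {z : ℕ → ℕ | z i = y i}) :=
    isOpen_biInter_finset fun i _ =>
      (continuous_apply (A := fun _ : ℕ => ℕ) i).isOpen_preimage {y i} (isOpen_discrete _)
  obtain ⟨_, hz, x, hx, rfl⟩ := _root_.mem_closure_iff.mp hy _ hU (by simp)
  simp only [Set.mem_iInter, Finset.mem_range] at hz
  exact ⟨x, hx, hz⟩

lemma lexLe_upperSeq_of_mem_Sig (hα0 : 0 ≤ α) (hβ : 0 < β) {y : ℕ → ℕ} (hy : y ∈ Sig α β) :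
    lexLe y (upperSeq α β) := by
  refine lexLe_iff_forall_le.mpr fun t hagree => ?_
  obtain ⟨x, hx, hxy⟩ := exists_Om_eq_of_mem_Sig hy (t + 1)
  have hle := lexLe_iff_forall_le.mp (lexLe_Om_upperSeq hα0 hβ hx) t
    fun i hi => (hxy i (by omega)).trans (hagree i hi)
  rwa [hxy t (by omega)] at hle

lemma exists_Om_eq_upperSeq (hβ : 0 < β) (t : ℕ) :
    ∃ x ∈ Set.Ico 0 1, ∀ i < t, Om α β x i = upperSeq α β i := by
  obtain ⟨ε, hε, H⟩ := exists_iterate_near_upperOrbit (α := α) hβ 0 t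
  set x : ℝ := 1 - min ε 1 / 2
  have hx : x ∈ Set.Ioo (upperOrbit α β 0 - ε) (upperOrbit α β 0) := by
    simp only [upperOrbit, Set.mem_Ioo, x]
    constructor <;> linarith [min_le_left ε 1, lt_min hε one_pos]
  refine ⟨x, ⟨by simp only [x]; linarith [min_le_right ε 1], hx.2⟩, fun i hi => ?_⟩
  rw [Om, (H x hx).1 i hi, zero_add, upperSeq]

lemma upperSeq_mem_Sig (hβ : 0 < β) : upperSeq α β ∈ Sig α β := by
  choose x hx hagree using exists_Om_eq_upperSeq (α := α) hβ
  have hlim : Filter.Tendsto (fun n => Om α β (x n)) Filter.atTop (nhds (upperSeq α β)) := by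
    refine tendsto_pi_nhds.mpr fun i => tendsto_const_nhds.congr' ?_
    filter_upwards [Filter.eventually_gt_atTop i] with n hn
    exact (hagree n i hn).symm
  exact mem_closure_of_tendsto hlim
    (Filter.Eventually.of_forall fun n => Set.mem_image_of_mem _ (hx n))

lemma eq_upperSeq_of_forall_lexLe (hα0 : 0 ≤ α) (hβ : 0 < β) {b : ℕ → ℕ} (hb : b ∈ Sig α β)
    (hbsup : ∀ y ∈ Sig α β, lexLe y b) : b = upperSeq α β :=
  lexLe_antisymm (lexLe_upperSeq_of_mem_Sig hα0 hβ hb) (hbsup _ (upperSeq_mem_Sig hβ))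

end Supremum

section Cylinders

def Cyl (α β : ℝ) (w : List ℕ) : Set ℝ :=
  {x | x ∈ Set.Ico 0 1 ∧ ∀ i < w.length, Om α β x i = w.getD i 0}

variable {α β : ℝ}

lemma Cyl_nil : Cyl α β [] = Set.Ico 0 1 := by
  ext x
  simp [Cyl]

lemma Cyl_subset_Ico (w : List ℕ) : Cyl α β w ⊆ Set.Ico 0 1 := fun _ hx => hx.1

lemma Cyl_append (w₁ w₂ : List ℕ) :
    Cyl α β (w₁ ++ w₂) = Cyl α β w₁ ∩ (F α β)^[w₁.length] ⁻¹' Cyl α β w₂ := by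
  ext x
  simp only [Cyl, Set.mem_inter_iff, Set.mem_preimage, Set.mem_ofPred_eq, List.length_append]
  constructor
  · rintro ⟨hx, hdig⟩
    refine ⟨⟨hx, fun i hi => ?_⟩, iterate_F_mem_Ico hx _, fun i hi => ?_⟩
    · rw [← List.getD_append w₁ w₂ 0 i hi]
      exact hdig i (by omega)
    · have h := hdig (w₁.length + i) (by omega)
      rwa [List.getD_append_right w₁ w₂ 0 _ (by omega), Nat.add_sub_cancel_left,
        ← Om_iterate] at h
  · rintro ⟨⟨hx, hdig₁⟩, -, hdig₂⟩
    refine ⟨hx, fun i hi => ?_⟩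
    rcases lt_or_ge i w₁.length with h | h
    · rw [List.getD_append _ _ _ _ h]
      exact hdig₁ i h
    · rw [List.getD_append_right _ _ _ _ h, ← hdig₂ (i - w₁.length) (by omega), Om_iterate,
        Nat.add_sub_cancel' h]

lemma Cyl_cons (d : ℕ) (w : List ℕ) : Cyl α β (d :: w) = Cyl α β [d] ∩ F α β ⁻¹' Cyl α β w :=
  Cyl_append [d] w

lemma mem_Cyl_singleton (hα0 : 0 ≤ α) (hβ : 0 < β) {d : ℕ} {x : ℝ} :
    x ∈ Cyl α β [d] ↔ x ∈ Set.Ico 0 1 ∧ ⌊β * x + α⌋ = d := by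
  refine and_congr_right fun hx => ?_
  have h := natCast_Om hα0 hβ hx 0
  simp only [Function.iterate_zero, id_eq] at h
  simp only [List.length_singleton, Nat.lt_one_iff, forall_eq, List.getD_cons_zero]
  omega

lemma inLang_iff_Cyl_nonempty (w : List ℕ) : inLang α β w ↔ (Cyl α β w).Nonempty := by
  constructor
  · rintro ⟨y, hy, hdig⟩
    obtain ⟨x, hx, hxy⟩ := exists_Om_eq_of_mem_Sig hy w.length
    refine ⟨x, hx, fun i hi => ?_⟩
    rw [hxy i hi, hdig ⟨i, hi⟩, List.getD_eq_getElem _ _ hi, List.get_eq_getElem]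
  · rintro ⟨x, hx, hdig⟩
    refine ⟨Om α β x, subset_closure ⟨x, hx, rfl⟩, fun i => ?_⟩
    rw [hdig i i.2, List.getD_eq_getElem _ _ i.2, List.get_eq_getElem]

lemma F_eq_of_mem_Cyl_singleton (hα0 : 0 ≤ α) (hβ : 0 < β) {d : ℕ} {x : ℝ}
    (hx : x ∈ Cyl α β [d]) : F α β x = β * x + α - d := by
  rw [F_apply, ((mem_Cyl_singleton hα0 hβ).mp hx).2, Int.cast_natCast]

lemma iterate_sub_iterate_of_mem_Cyl (hα0 : 0 ≤ α) (hβ : 0 < β) {w : List ℕ} {x y : ℝ}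
    (hx : x ∈ Cyl α β w) (hy : y ∈ Cyl α β w) :
    (F α β)^[w.length] x - (F α β)^[w.length] y = β ^ w.length * (x - y) := by
  induction w generalizing x y with
  | nil => simp
  | cons d w ih =>
    rw [Cyl_cons] at hx hy
    rw [List.length_cons, Function.iterate_succ_apply, Function.iterate_succ_apply,
      ih hx.2 hy.2, F_eq_of_mem_Cyl_singleton hα0 hβ hx.1,
      F_eq_of_mem_Cyl_singleton hα0 hβ hy.1, pow_succ]
    ring

lemma Cyl_cons_eq_Ico (hα0 : 0 ≤ α) (hβ : 0 < β) {w : List ℕ} {p q : ℝ}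
    (hw : Cyl α β w = Set.Ico p q) (hp : 0 ≤ p) (hq : q ≤ 1) (d : ℕ) :
    Cyl α β (d :: w) = Set.Ico (max 0 ((p + d - α) / β)) (min 1 ((q + d - α) / β)) := by
  ext x
  rw [Cyl_cons, Set.mem_inter_iff, mem_Cyl_singleton hα0 hβ, Set.mem_preimage, hw,
    Set.mem_Ico, Set.mem_Ico, Set.mem_Ico, max_le_iff, lt_min_iff, div_le_iff₀ hβ,
    lt_div_iff₀ hβ]
  constructor
  · rintro ⟨⟨⟨hx0, hx1⟩, hfloor⟩, hFp, hFq⟩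
    rw [F_apply, hfloor, Int.cast_natCast] at hFp hFq
    exact ⟨⟨hx0, by linarith⟩, hx1, by linarith⟩
  · rintro ⟨⟨hx0, hxp⟩, hx1, hxq⟩
    have hfloor : ⌊β * x + α⌋ = d := by
      rw [Int.floor_eq_iff, Int.cast_natCast]
      constructor <;> linarith
    rw [F_apply, hfloor, Int.cast_natCast]
    exact ⟨⟨⟨hx0, hx1⟩, rfl⟩, by linarith, by linarith⟩

lemma exists_Cyl_eq_Ico (hα0 : 0 ≤ α) (hβ : 0 < β) (w : List ℕ) :
    ∃ p q, Cyl α β w = Set.Ico p q ∧ 0 ≤ p ∧ q ≤ 1 := by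
  induction w with
  | nil => exact ⟨0, 1, Cyl_nil, le_rfl, le_rfl⟩
  | cons d w ih =>
    obtain ⟨p, q, hw, hp, hq⟩ := ih
    exact ⟨_, _, Cyl_cons_eq_Ico hα0 hβ hw hp hq d, le_max_left _ _, min_le_left _ _⟩

lemma exists_Cyl_eq_Ico_of_nonempty (hα0 : 0 ≤ α) (hβ : 0 < β) {w : List ℕ}
    (hne : (Cyl α β w).Nonempty) : ∃ p q, Cyl α β w = Set.Ico p q ∧ p < q := by
  obtain ⟨p, q, hw, -, -⟩ := exists_Cyl_eq_Ico hα0 hβ w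
  obtain ⟨x, hx⟩ := hne
  rw [hw] at hx
  exact ⟨p, q, hw, hx.1.trans_lt hx.2⟩

lemma image_iterate_Cyl (hα0 : 0 ≤ α) (hβ : 0 < β) {w : List ℕ} {p q : ℝ}
    (hw : Cyl α β w = Set.Ico p q) (hpq : p < q) :
    (F α β)^[w.length] '' Cyl α β w =
      Set.Ico ((F α β)^[w.length] p) ((F α β)^[w.length] p + β ^ w.length * (q - p)) := by
  set n := w.length
  have hp : p ∈ Cyl α β w := hw ▸ Set.left_mem_Ico.mpr hpq
  have haffine : Set.EqOn (F α β)^[n] (fun x => β ^ n * x + ((F α β)^[n] p - β ^ n * p))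
      (Set.Ico p q) := fun x hx => by
    have := iterate_sub_iterate_of_mem_Cyl hα0 hβ (hw ▸ hx) hp
    dsimp only
    linarith
  rw [hw, haffine.image_eq, Set.image_affine_Ico (by positivity)]
  congr 1 <;> ring

end Cylinders

section Endpoints

lemma tailAgrees_zero (s : ℕ → ℕ) (w : List ℕ) : tailAgrees s w 0 :=
  ⟨Nat.zero_le _, fun _ h => absurd h (Nat.not_lt_zero _)⟩

lemma tailAgrees.cons {s : ℕ → ℕ} {w : List ℕ} {k : ℕ} (h : tailAgrees s w k) (d : ℕ) :
    tailAgrees s (d :: w) k := by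
  refine ⟨h.1.trans (Nat.le_succ _), fun i hi => ?_⟩
  rw [List.length_cons, show w.length + 1 - k + i = w.length - k + i + 1 by have := h.1; omega,
    List.getD_cons_succ]
  exact h.2 i hi

lemma le_kmax_of_tailAgrees {s : ℕ → ℕ} {w : List ℕ} {k : ℕ} (h : tailAgrees s w k) :
    k ≤ kmax s w :=
  le_csSup ⟨w.length, fun _ hj => hj.1⟩ h

lemma length_pre (s : ℕ → ℕ) (n : ℕ) : (pre s n).length = n := List.length_ofFn

lemma getD_pre (s : ℕ → ℕ) {n i : ℕ} (hi : i < n) : (pre s n).getD i 0 = s i := by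
  rw [List.getD_eq_getElem _ _ (by rwa [length_pre])]
  simp [pre]

lemma tailAgrees.append_pre {s : ℕ → ℕ} {w : List ℕ} {m : ℕ} (h : tailAgrees s w m) (n : ℕ) :
    tailAgrees s (w ++ pre (fun i => s (m + i)) n) (m + n) := by
  have hm := h.1
  refine ⟨by rw [List.length_append, length_pre]; omega, fun i hi => ?_⟩
  rw [List.length_append, length_pre]
  rcases lt_or_ge i m with him | him
  · rw [show w.length + n - (m + n) + i = w.length - m + i by omega, List.getD_append _ _ _ _
      (by omega)]
    exact h.2 i him
  · rw [List.getD_append_right _ _ _ _ (by omega), getD_pre _ (by omega)]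
    congr 1
    omega

lemma tailAgrees.of_append {s : ℕ → ℕ} {w v : List ℕ} {k : ℕ} (h : tailAgrees s (w ++ v) k)
    (hk : v.length ≤ k) : tailAgrees s w (k - v.length) := by
  have hkl := h.1
  rw [List.length_append] at hkl
  refine ⟨by omega, fun i hi => ?_⟩
  have := h.2 i (by omega)
  rwa [List.length_append, show w.length + v.length - k + i = w.length - (k - v.length) + i by
    omega, List.getD_append _ _ _ _ (by omega)] at this

lemma mem_D_of_tailAgrees {a b : ℕ → ℕ} {u : List ℕ} {j k : ℕ} (ha : tailAgrees a u j)
    (hb : tailAgrees b u k) (hkj : k ≤ j) : k ∈ D a b := by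
  refine ⟨j - k, fun i hi => ?_⟩
  rw [← hb.2 i hi, ← ha.2 (j - k + i) (by omega)]
  congr 1
  have := ha.1
  omega

variable {α β : ℝ}

lemma tailAgrees_length_of_mem_Cyl {s : ℕ → ℕ} {w : List ℕ} {x : ℝ} (hx : x ∈ Cyl α β w)
    (hs : ∀ i < w.length, Om α β x i = s i) : tailAgrees s w w.length :=
  ⟨le_rfl, fun i hi => by rw [Nat.sub_self, zero_add, ← hx.2 i hi, hs i hi]⟩

lemma exists_tailAgrees_Om_zero (hα0 : 0 ≤ α) (hβ : 0 < β) {w : List ℕ} {p q : ℝ}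
    (hw : Cyl α β w = Set.Ico p q) (hpq : p < q) :
    ∃ m, tailAgrees (Om α β 0) w m ∧ (F α β)^[w.length] p = (F α β)^[m] 0 := by
  induction w generalizing p q with
  | nil =>
    rw [Cyl_nil, Set.Ico_eq_Ico_iff (Or.inl one_pos)] at hw
    exact ⟨0, tailAgrees_zero _ _, by simp [← hw.1]⟩
  | cons d w ih =>
    have hp : p ∈ Cyl α β (d :: w) := hw ▸ Set.left_mem_Ico.mpr hpq
    by_cases hp0 : p = 0
    · subst hp0
      exact ⟨w.length + 1, tailAgrees_length_of_mem_Cyl hp fun i _ => rfl, rfl⟩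
    obtain ⟨p₀, q₀, hw₀, hp₀, hq₀⟩ := exists_Cyl_eq_Ico hα0 hβ w
    rw [Cyl_cons_eq_Ico hα0 hβ hw₀ hp₀ hq₀ d, Set.Ico_eq_Ico_iff (Or.inr hpq)] at hw
    have hβp : β * p = p₀ + d - α := by
      rcases max_choice 0 ((p₀ + d - α) / β) with h | h <;> rw [h] at hw
      · exact absurd hw.1.symm hp0
      · rw [← hw.1]
        field_simp
    rw [Cyl_cons] at hp
    have hFp : F α β p = p₀ := by
      rw [F_eq_of_mem_Cyl_singleton hα0 hβ hp.1, hβp]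
      ring
    have hp₀q₀ : p₀ < q₀ := by
      have : F α β p ∈ Set.Ico p₀ q₀ := hw₀ ▸ hp.2
      rw [hFp] at this
      exact this.2
    obtain ⟨m, hm, hval⟩ := ih hw₀ hp₀q₀
    exact ⟨m, hm.cons d, by rw [List.length_cons, Function.iterate_succ_apply, hFp, hval]⟩

lemma tailAgrees_upperSeq_of_Cyl_eq_Ico_one (hα0 : 0 ≤ α) (hβ : 0 < β) {w : List ℕ} {p : ℝ}
    (hw : Cyl α β w = Set.Ico p 1) (hp : p < 1) :
    tailAgrees (upperSeq α β) w w.length ∧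
      (F α β)^[w.length] p + β ^ w.length * (1 - p) = upperOrbit α β w.length := by
  obtain ⟨ε, hε, H⟩ := exists_iterate_near_upperOrbit (α := α) hβ 0 w.length
  set u := (max p (1 - ε) + 1) / 2
  have hmax : max p (1 - ε) < 1 := max_lt hp (by linarith)
  have hu : u ∈ Set.Ico p 1 ∩ Set.Ioo (upperOrbit α β 0 - ε) (upperOrbit α β 0) := by
    simp only [u, upperOrbit, Set.mem_inter_iff, Set.mem_Ico, Set.mem_Ioo]
    refine ⟨⟨?_, by linarith⟩, ?_, by linarith⟩ <;>
      linarith [le_max_left p (1 - ε), le_max_right p (1 - ε)]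
  have huw : u ∈ Cyl α β w := hw ▸ hu.1
  obtain ⟨hdigits, hval⟩ := H u hu.2
  refine ⟨tailAgrees_length_of_mem_Cyl huw fun i hi => ?_, ?_⟩
  · rw [Om, hdigits i hi, zero_add, upperSeq]
  · have haff := iterate_sub_iterate_of_mem_Cyl hα0 hβ huw (hw ▸ Set.left_mem_Ico.mpr hp)
    rw [zero_add, show upperOrbit α β 0 = 1 from rfl] at hval
    linear_combination hval - haff

/-- `F^[|w|] p + β ^ |w| * (q - p)` is the left limit of `F^[|w|]` at the right endpoint `q`. -/
lemma exists_tailAgrees_upperSeq (hα0 : 0 ≤ α) (hβ : 0 < β) {w : List ℕ} {p q : ℝ}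
    (hw : Cyl α β w = Set.Ico p q) (hpq : p < q) :
    ∃ m, tailAgrees (upperSeq α β) w m ∧
      (F α β)^[w.length] p + β ^ w.length * (q - p) = upperOrbit α β m := by
  induction w generalizing p q with
  | nil =>
    rw [Cyl_nil, Set.Ico_eq_Ico_iff (Or.inl one_pos)] at hw
    exact ⟨0, tailAgrees_zero _ _, by simp [upperOrbit, ← hw.1, ← hw.2]⟩
  | cons d w ih =>
    by_cases hq1 : q = 1
    · subst hq1
      exact ⟨_, tailAgrees_upperSeq_of_Cyl_eq_Ico_one hα0 hβ hw hpq⟩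
    have hp : p ∈ Cyl α β (d :: w) := hw ▸ Set.left_mem_Ico.mpr hpq
    obtain ⟨p₀, q₀, hw₀, hp₀, hq₀⟩ := exists_Cyl_eq_Ico hα0 hβ w
    rw [Cyl_cons_eq_Ico hα0 hβ hw₀ hp₀ hq₀ d, Set.Ico_eq_Ico_iff (Or.inr hpq)] at hw
    have hβq : β * q = q₀ + d - α := by
      rcases min_choice 1 ((q₀ + d - α) / β) with h | h <;> rw [h] at hw
      · exact absurd hw.2.symm hq1
      · rw [← hw.2]
        field_simp
    rw [Cyl_cons] at hp
    have hFp := F_eq_of_mem_Cyl_singleton hα0 hβ hp.1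
    have hp₀q₀ : p₀ < q₀ := by
      have : F α β p ∈ Set.Ico p₀ q₀ := hw₀ ▸ hp.2
      exact this.1.trans_lt this.2
    obtain ⟨m, hm, hval⟩ := ih hw₀ hp₀q₀
    refine ⟨m, hm.cons d, ?_⟩
    have haff := iterate_sub_iterate_of_mem_Cyl hα0 hβ hp.2 (hw₀ ▸ Set.left_mem_Ico.mpr hp₀q₀)
    rw [List.length_cons, Function.iterate_succ_apply, pow_succ]
    rw [hFp] at haff ⊢
    linear_combination haff + hval + β ^ w.length * hβq

end Endpoints

section Follower

def follower (α β : ℝ) (w : List ℕ) : Set ℝ := (F α β)^[w.length] '' Cyl α β w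

variable {α β : ℝ}

lemma follower_subset_Ico (w : List ℕ) : follower α β w ⊆ Set.Ico 0 1 := by
  rintro _ ⟨x, hx, rfl⟩
  exact iterate_F_mem_Ico hx.1 _

lemma follower_append (w v : List ℕ) :
    follower α β (w ++ v) = (F α β)^[v.length] '' (follower α β w ∩ Cyl α β v) := by
  rw [follower, follower, ← Set.image_inter_preimage, ← Cyl_append, Set.image_image,
    List.length_append, add_comm, Function.iterate_add]
  rfl

lemma Cyl_append_pre_upperSeq_nonempty (hα0 : 0 ≤ α) (hβ : 0 < β) {w : List ℕ} {p q : ℝ}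
    (hw : Cyl α β w = Set.Ico p q) (hpq : p < q) {m : ℕ}
    (hm : (F α β)^[w.length] p + β ^ w.length * (q - p) = upperOrbit α β m) (n : ℕ) :
    (Cyl α β (w ++ pre (fun i => upperSeq α β (m + i)) n)).Nonempty := by
  obtain ⟨ε, hε, H⟩ := exists_iterate_near_upperOrbit (α := α) hβ m n
  set c := (F α β)^[w.length] p
  have hc : c < upperOrbit α β m := by
    rw [← hm]
    have : 0 < β ^ w.length * (q - p) := mul_pos (by positivity) (by linarith)
    linarith
  set y := (max c (upperOrbit α β m - ε) + upperOrbit α β m) / 2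
  have hmax : max c (upperOrbit α β m - ε) < upperOrbit α β m := max_lt hc (by linarith)
  have hy : y ∈ Set.Ico c (upperOrbit α β m) ∩
      Set.Ioo (upperOrbit α β m - ε) (upperOrbit α β m) := by
    simp only [y, Set.mem_inter_iff, Set.mem_Ico, Set.mem_Ioo]
    refine ⟨⟨?_, by linarith⟩, ?_, by linarith⟩ <;>
      linarith [le_max_left c (upperOrbit α β m - ε), le_max_right c (upperOrbit α β m - ε)]
  have hyw : y ∈ follower α β w := by
    rw [follower, image_iterate_Cyl hα0 hβ hw hpq, hm]
    exact hy.1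
  have hyv : y ∈ Cyl α β (pre (fun i => upperSeq α β (m + i)) n) := by
    refine ⟨follower_subset_Ico w hyw, fun i hi => ?_⟩
    rw [length_pre] at hi
    rw [getD_pre _ hi, Om, (H y hy.2).1 i hi, upperSeq]
  have : (follower α β (w ++ pre (fun i => upperSeq α β (m + i)) n)).Nonempty := by
    rw [follower_append]
    exact ⟨_, Set.mem_image_of_mem _ ⟨hyw, hyv⟩⟩
  exact Set.image_nonempty.mp this

end Follower

section KeyLemma

lemma exists_pos_le_of_pos (s : Finset ℝ) : ∃ δ > 0, ∀ x ∈ s, 0 < x → δ ≤ x := by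
  induction s using Finset.induction_on with
  | empty => exact ⟨1, one_pos, by simp⟩
  | insert a s _ ih =>
    obtain ⟨δ, hδ, h⟩ := ih
    by_cases ha : 0 < a
    · refine ⟨min a δ, lt_min ha hδ, fun x hx hx0 => ?_⟩
      rcases Finset.mem_insert.mp hx with rfl | hx
      · exact min_le_left _ _
      · exact (min_le_right _ _).trans (h x hx hx0)
    · refine ⟨δ, hδ, fun x hx hx0 => ?_⟩
      rcases Finset.mem_insert.mp hx with rfl | hx
      · exact absurd hx0 ha
      · exact h x hx hx0

variable {α β : ℝ}

/-- Extend `w` by the next `N + 1` digits of `b`: the follower of the extension is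
`[F^[j] 0, upperOrbit k)`, with `k` bounded through `k₂(w) ≤ M` and `j` through `D(a) ≤ N`. -/
lemma exists_orbit_gap_le (hα0 : 0 ≤ α) (hβ : 0 < β) {N : ℕ}
    (hN : N ∈ upperBounds (D (Om α β 0) (upperSeq α β))) {M : ℕ} {w : List ℕ} {p q : ℝ}
    (hw : Cyl α β w = Set.Ico p q) (hpq : p < q) (hM : kmax (upperSeq α β) w ≤ M) :
    ∃ j k, j ≤ M + N + 1 ∧ k ≤ M + N + 1 ∧ 0 < upperOrbit α β k - (F α β)^[j] 0 ∧
      upperOrbit α β k - (F α β)^[j] 0 ≤ β ^ (N + 1) * (β ^ w.length * (q - p)) := by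
  set R := N + 1
  obtain ⟨m, hm, hmval⟩ := exists_tailAgrees_upperSeq hα0 hβ hw hpq
  obtain ⟨p', q', hw', hpq'⟩ := exists_Cyl_eq_Ico_of_nonempty hα0 hβ
    (Cyl_append_pre_upperSeq_nonempty hα0 hβ hw hpq hmval R)
  obtain ⟨j, hj, hjval⟩ := exists_tailAgrees_Om_zero hα0 hβ hw' hpq'
  obtain ⟨k, hk, hkval⟩ := exists_tailAgrees_upperSeq hα0 hβ hw' hpq'
  have hmM : m ≤ M := (le_kmax_of_tailAgrees hm).trans hM
  have hjR : j < m + R := by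
    by_contra! h
    have := hN (mem_D_of_tailAgrees hj (hm.append_pre R) h)
    omega
  have hkR : k ≤ M + R := by
    by_cases hkR : R ≤ k
    · have := le_kmax_of_tailAgrees (hk.of_append (by rwa [length_pre]))
      rw [length_pre] at this
      omega
    · omega
  have hshrink : q' - p' ≤ q - p := by
    have hsub : Set.Ico p' q' ⊆ Set.Ico p q := by
      rw [← hw, ← hw', Cyl_append]
      exact Set.inter_subset_left
    obtain ⟨h1, h2⟩ := (Set.Ico_subset_Ico_iff hpq').mp hsub
    linarith
  have hgap : upperOrbit α β k - (F α β)^[j] 0 = β ^ (w.length + R) * (q' - p') := by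
    rw [← hkval, ← hjval, List.length_append, length_pre]
    ring
  refine ⟨j, k, by omega, by omega, hgap ▸ mul_pos (by positivity) (by linarith), ?_⟩
  rw [hgap, ← mul_assoc, ← pow_add, add_comm]
  gcongr

lemma exists_Ico_subset_follower (hα0 : 0 ≤ α) (hβ : 0 < β)
    (hD : BddAbove (D (Om α β 0) (upperSeq α β))) (M : ℕ) :
    ∃ δ > 0, ∀ w, (Cyl α β w).Nonempty → kmax (upperSeq α β) w ≤ M →
      ∃ c e, δ ≤ e - c ∧ Set.Ico c e ⊆ follower α β w := by
  obtain ⟨N, hN⟩ := hD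
  set K := M + N + 1
  set gaps : Finset ℝ := (Finset.range (K + 1) ×ˢ Finset.range (K + 1)).image
    fun kj => upperOrbit α β kj.1 - (F α β)^[kj.2] 0
  obtain ⟨δ, hδ, hδle⟩ := exists_pos_le_of_pos gaps
  refine ⟨δ / β ^ (N + 1), by positivity, fun w hne hM => ?_⟩
  obtain ⟨p, q, hw, hpq⟩ := exists_Cyl_eq_Ico_of_nonempty hα0 hβ hne
  obtain ⟨j, k, hj, hk, hpos, hle⟩ := exists_orbit_gap_le hα0 hβ hN hw hpq hM
  refine ⟨_, _, ?_, (image_iterate_Cyl hα0 hβ hw hpq).ge⟩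
  rw [div_le_iff₀ (by positivity), add_sub_cancel_left, mul_comm]
  have hmem : upperOrbit α β k - (F α β)^[j] 0 ∈ gaps := Finset.mem_image.mpr
    ⟨(k, j), by simp only [Finset.mem_product, Finset.mem_range]; omega, rfl⟩
  exact (hδle _ hmem hpos).trans hle

end KeyLemma

section Expansion

def FullReach (α β : ℝ) (I : Set ℝ) (t : ℕ) : Prop :=
  ∃ v : List ℕ, v.length = t ∧ Set.Ico 0 1 ⊆ (F α β)^[t] '' (I ∩ Cyl α β v)

variable {α β : ℝ}

lemma FullReach.mono {I J : Set ℝ} {t : ℕ} (h : FullReach α β I t) (hIJ : I ⊆ J) :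
    FullReach α β J t :=
  let ⟨v, hv, hsub⟩ := h
  ⟨v, hv, hsub.trans (Set.image_mono (Set.inter_subset_inter_left _ hIJ))⟩

lemma fullReach_Ico_zero_one : FullReach α β (Set.Ico 0 1) 0 :=
  ⟨[], rfl, by simp [Cyl_nil]⟩

lemma FullReach.of_image {I : Set ℝ} {d t : ℕ} (h : FullReach α β (F α β '' (I ∩ Cyl α β [d])) t) :
    FullReach α β I (t + 1) := by
  obtain ⟨v, hv, hsub⟩ := h
  refine ⟨d :: v, by rw [List.length_cons, hv], ?_⟩
  rwa [Cyl_cons, ← Set.inter_assoc, Function.iterate_succ, Set.image_comp,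
    Set.image_inter_preimage]

lemma Ico_subset_image_F (hα0 : 0 ≤ α) (hβ : 0 < β) {I : Set ℝ} {u v : ℝ} {d : ℕ}
    (hI : Set.Ico u v ⊆ I) (hu : 0 ≤ u) (hv : v ≤ 1) (hdu : d ≤ β * u + α)
    (hdv : β * v + α ≤ d + 1) :
    Set.Ico (β * u + α - d) (β * v + α - d) ⊆ F α β '' (I ∩ Cyl α β [d]) := by
  rintro y ⟨hy₁, hy₂⟩
  set x := (y + d - α) / β
  have hβx : β * x = y + d - α := by simp only [x]; field_simp
  have hx : x ∈ Set.Ico u v := by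
    constructor <;> nlinarith
  have hfloor : ⌊β * x + α⌋ = d := by
    rw [Int.floor_eq_iff, Int.cast_natCast]
    constructor <;> linarith
  refine ⟨x, ⟨hI hx, (mem_Cyl_singleton hα0 hβ).mpr ⟨⟨hu.trans hx.1, hx.2.trans_le hv⟩,
    hfloor⟩⟩, ?_⟩
  rw [F_apply, hfloor, Int.cast_natCast]
  linarith

/-- Either `[U, V)` contains a full branch of `F`, whose image is `[0,1)`, or it meets some
branch in at least half of its length. -/
lemma exists_Ico_subset_image_F (hα0 : 0 ≤ α) (hβ : 0 < β) {U V : ℝ} (hUV : U < V)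
    (hI : Set.Ico U V ⊆ Set.Ico 0 1) :
    ∃ d c e, min 1 (β * (V - U) / 2) ≤ e - c ∧
      Set.Ico c e ⊆ F α β '' (Set.Ico U V ∩ Cyl α β [d]) := by
  obtain ⟨hU, hV⟩ := (Set.Ico_subset_Ico_iff hUV).mp hI
  set d := ⌊β * U + α⌋.toNat
  have hd : (d : ℝ) = ⌊β * U + α⌋ := by
    exact_mod_cast Int.toNat_of_nonneg (Int.floor_nonneg.mpr (by positivity))
  have hdU : (d : ℝ) ≤ β * U + α := hd ▸ Int.floor_le _
  have hUd : β * U + α < d + 1 := hd ▸ Int.lt_floor_add_one _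
  set c₁ := (d + 1 - α) / β
  have hβc₁ : β * c₁ = d + 1 - α := by simp only [c₁]; field_simp
  have hUc₁ : U < c₁ := by nlinarith
  have hβc₂ : β * (c₁ + 1 / β) = d + 2 - α := by rw [mul_add, hβc₁, mul_one_div_cancel hβ.ne']; ring
  by_cases hVc₁ : V ≤ c₁
  · refine ⟨d, _, _, ?_, Ico_subset_image_F hα0 hβ le_rfl hU hV hdU (by nlinarith)⟩
    nlinarith [min_le_right 1 (β * (V - U) / 2)]
  push Not at hVc₁
  by_cases hfull : c₁ + 1 / β ≤ V
  · refine ⟨d + 1, _, _, ?_, Ico_subset_image_F (d := d + 1) hα0 hβ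
      (Set.Ico_subset_Ico hUc₁.le hfull) (hU.trans hUc₁.le) (hfull.trans hV)
      (by push_cast; linarith) (by push_cast; linarith)⟩
    nlinarith [min_le_left 1 (β * (V - U) / 2)]
  push Not at hfull
  by_cases hleft : V - U ≤ 2 * (c₁ - U)
  · refine ⟨d, _, _, ?_, Ico_subset_image_F (v := c₁) hα0 hβ
      (Set.Ico_subset_Ico le_rfl hVc₁.le) hU (by linarith) hdU (by linarith)⟩
    nlinarith [min_le_right 1 (β * (V - U) / 2)]
  · have hβV : β * V < β * (c₁ + 1 / β) := by gcongr
    refine ⟨d + 1, _, _, ?_, Ico_subset_image_F (d := d + 1) hα0 hβ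
      (Set.Ico_subset_Ico hUc₁.le le_rfl) (hU.trans hUc₁.le) hV
      (by push_cast; linarith) (by push_cast; linarith)⟩
    nlinarith [min_le_right 1 (β * (V - U) / 2)]

lemma fullReach_of_one_le (hα0 : 0 ≤ α) (hβ : 2 < β) (k : ℕ) {U V : ℝ} (hUV : U < V)
    (hI : Set.Ico U V ⊆ Set.Ico 0 1) (hk : 1 ≤ (β / 2) ^ k * (V - U)) :
    FullReach α β (Set.Ico U V) k := by
  induction k generalizing U V with
  | zero =>
    obtain ⟨hU, hV⟩ := (Set.Ico_subset_Ico_iff hUV).mp hI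
    rw [pow_zero, one_mul] at hk
    rw [show U = 0 by linarith, show V = 1 by linarith]
    exact fullReach_Ico_zero_one
  | succ k ih =>
    obtain ⟨d, c, e, hce, hsub⟩ :=
      exists_Ico_subset_image_F hα0 (by linarith : (0 : ℝ) < β) hUV hI
    have hpow : 1 ≤ (β / 2) ^ k := one_le_pow₀ (by linarith)
    have hce' : 1 ≤ (β / 2) ^ k * (e - c) := by
      rcases min_choice 1 (β * (V - U) / 2) with h | h <;> rw [h] at hce
      · nlinarith
      · calc 1 ≤ (β / 2) ^ (k + 1) * (V - U) := hk
          _ = (β / 2) ^ k * (β * (V - U) / 2) := by ring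
          _ ≤ (β / 2) ^ k * (e - c) := by gcongr
    have hce0 : Set.Ico c e ⊆ Set.Ico 0 1 :=
      hsub.trans (Set.image_subset_iff.mpr fun x _ => F_mem_Ico x)
    have hc : c < e := by nlinarith
    exact ((ih hc hce0 hce').mono hsub).of_image

lemma exists_fullReach (hα0 : 0 ≤ α) (hβ : 2 < β) {δ : ℝ} (hδ : 0 < δ) :
    ∃ τ, 1 ≤ τ ∧ ∀ c e : ℝ, δ ≤ e - c → Set.Ico c e ⊆ Set.Ico 0 1 →
      FullReach α β (Set.Ico c e) τ := by
  obtain ⟨k, hk⟩ := pow_unbounded_of_one_lt (1 / δ) (by linarith : (1 : ℝ) < β / 2)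
  refine ⟨k + 1, by omega, fun c e hce hI =>
    fullReach_of_one_le hα0 hβ _ (by linarith : c < e) hI ?_⟩
  rw [div_lt_iff₀ hδ] at hk
  calc 1 ≤ (β / 2) ^ k * δ := hk.le
    _ ≤ (β / 2) ^ (k + 1) * (e - c) :=
      mul_le_mul (pow_le_pow_right₀ (by linarith) k.le_succ) hce hδ.le (by positivity)

end Expansion

section Specification

lemma glue_zero (w : Fin 1 → List ℕ) (v : Fin 0 → List ℕ) : glue w v = w (Fin.last 0) := by
  simp [glue]

lemma glue_snoc {n : ℕ} (w : Fin (n + 2) → List ℕ) (v : Fin n → List ℕ) (u : List ℕ) :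
    glue w (Fin.snoc v u) =
      glue (fun i : Fin (n + 1) => w i.castSucc) v ++ (u ++ w (Fin.last (n + 1))) := by
  simp only [glue, List.ofFn_succ', List.concat_eq_append, List.flatten_append,
    Fin.snoc_castSucc, Fin.snoc_last]
  simp [List.append_assoc]

variable {α β : ℝ}

lemma follower_subset_follower_append {u v w : List ℕ}
    (hv : Set.Ico 0 1 ⊆ (F α β)^[v.length] '' (follower α β u ∩ Cyl α β v)) :
    follower α β w ⊆ follower α β (u ++ (v ++ w)) := by
  rw [← List.append_assoc, follower_append, follower_append]
  exact Set.image_mono (Set.subset_inter ((Cyl_subset_Ico w).trans hv) le_rfl)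

/-- The follower of a glued word contains the follower of its last piece, so the gluing can be
continued. -/
lemma hasSpec_of_fullReach {G : List ℕ → Prop} {τ : ℕ} (hτ : 1 ≤ τ)
    (hG : ∀ w, G w → inLang α β w ∧ FullReach α β (follower α β w) τ) :
    HasSpec (inLang α β) G := by
  have hglue : ∀ n (w : Fin (n + 1) → List ℕ), (∀ i, G (w i)) → ∃ v : Fin n → List ℕ,
      (∀ i, (v i).length = τ ∧ inLang α β (v i)) ∧
        follower α β (w (Fin.last n)) ⊆ follower α β (glue w v) := by
    intro n
    induction n with
    | zero => exact fun w _ => ⟨Fin.elim0, fun i => i.elim0, by rw [glue_zero]⟩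
    | succ n ih =>
      intro w hw
      obtain ⟨v, hv, hsub⟩ := ih (fun i => w i.castSucc) fun i => hw _
      obtain ⟨u, hu, hreach⟩ := (hG _ (hw (Fin.last n).castSucc)).2.mono hsub
      refine ⟨Fin.snoc v u, Fin.lastCases ?_ fun i => ?_, ?_⟩
      · rw [glue_snoc]
        exact follower_subset_follower_append (hu ▸ hreach)
      · obtain ⟨x, hx, -⟩ := hreach (Set.left_mem_Ico.mpr one_pos)
        rw [Fin.snoc_last]
        exact ⟨hu, (inLang_iff_Cyl_nonempty u).mpr ⟨x, hx.2⟩⟩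
      · rw [Fin.snoc_castSucc]
        exact hv i
  refine ⟨τ, hτ, fun n w hw => ?_⟩
  obtain ⟨v, hv, hsub⟩ := hglue n w hw
  obtain ⟨x, hx⟩ := (inLang_iff_Cyl_nonempty _).mp (hG _ (hw (Fin.last n))).1
  exact ⟨v, hv, (inLang_iff_Cyl_nonempty _).mpr
    (Set.image_nonempty.mp ⟨_, hsub ⟨x, hx, rfl⟩⟩)⟩

end Specification

theorem GM_hasSpec_general (α β : ℝ) (hα0 : 0 ≤ α) (hβ : 2 < β)
    (b : ℕ → ℕ) (hb : b ∈ Sig α β) (hbsup : ∀ y ∈ Sig α β, lexLe y b)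
    (hD : BddAbove (D (Om α β 0) b)) (M : ℕ) :
    HasSpec (inLang α β) (fun w => inLang α β w ∧ kmax b w ≤ M) := by
  have hβ0 : 0 < β := by linarith
  obtain rfl := eq_upperSeq_of_forall_lexLe hα0 hβ0 hb hbsup
  obtain ⟨δ, hδ, hfollower⟩ := exists_Ico_subset_follower hα0 hβ0 hD M
  obtain ⟨τ, hτ, hreach⟩ := exists_fullReach hα0 hβ hδ
  refine hasSpec_of_fullReach hτ fun w ⟨hw, hwM⟩ => ⟨hw, ?_⟩
  obtain ⟨c, e, hce, hsub⟩ := hfollower w ((inLang_iff_Cyl_nonempty w).mp hw) hwM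
  exact (hreach c e hce (hsub.trans (follower_subset_Ico w))).mono hsub

/-- **Proposition.** For `0 ≤ α < 1` and `β > 2` with `𝖣(a)` bounded, the set
`𝒢(M) = {w ∈ 𝓛 : k₂(w) ≤ M}` has specification for every `M ∈ ℕ`. -/
theorem GM_hasSpec (α β : ℝ) (hα0 : 0 ≤ α) (hα1 : α < 1) (hβ : 2 < β)
    (b : ℕ → ℕ) (hb : b ∈ Sig α β) (hbsup : ∀ y ∈ Sig α β, lexLe y b)
    (hD : BddAbove (D (Om α β 0) b)) (M : ℕ) :
    HasSpec (inLang α β) (fun w => inLang α β w ∧ kmax b w ≤ M) :=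
  GM_hasSpec_general α β hα0 hβ b hb hbsup hD M

end IntermediateBeta
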